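/- Let k ∈ 2ℤ and let s, w ∈ ℂ satisfy 2 < Re(s) < k−2, Re(w) < Re(s)−1 and Re(w) < k−1−Re(s). Then for all z ∈ ℍ, ζ(1−w+s) · E_{s,k−s}(z,w) = 2 Σ_{a=1}^∞ a^{w−s−1} Σ_{b=0}^{a−1} C_k(z, s; b/a). -/

import Mathlib

noncomputable section

open Complex Filter MeasureTheory

abbrev SL2Z := Matrix.SpecialLinearGroup (Fin 2) ℤ
abbrev SL2R := Matrix.SpecialLinearGroup (Fin 2) ℝ

/-- `j(γ,z) = cz+d` for `γ ∈ SL(2,ℤ)`. -/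
def jZ (γ : SL2Z) (z : ℂ) : ℂ := ((γ 1 0 : ℤ) : ℂ) * z + ((γ 1 1 : ℤ) : ℂ)

/-- The Möbius action `γz = (az+b)/(cz+d)` for `γ ∈ SL(2,ℤ)`. -/
def actZ (γ : SL2Z) (z : ℂ) : ℂ := (((γ 0 0 : ℤ) : ℂ) * z + ((γ 0 1 : ℤ) : ℂ)) / jZ γ z

/-- `j(γ,z) = cz+d` for `γ ∈ SL(2,ℝ)`. -/
def jR (γ : SL2R) (z : ℂ) : ℂ := ((γ 1 0 : ℝ) : ℂ) * z + ((γ 1 1 : ℝ) : ℂ)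

/-- The Möbius action for `γ ∈ SL(2,ℝ)`. -/
def actR (γ : SL2R) (z : ℂ) : ℂ := (((γ 0 0 : ℝ) : ℂ) * z + ((γ 0 1 : ℝ) : ℂ)) / jR γ z

/-- Coprime pairs `(c,d)`, parametrizing the cosets `B\Γ` via the bottom row. -/
def CP : Type := {p : ℤ × ℤ // IsCoprime p.1 p.2}

/-- Coprime pairs with normalized sign, parametrizing `Γ∞\Γ` via the bottom row. -/
def CP1 : Type := {p : ℤ × ℤ // IsCoprime p.1 p.2 ∧ (0 < p.1 ∨ (p.1 = 0 ∧ 0 < p.2))}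

/-- `j(γ,z) = cz+d` in terms of the bottom row. -/
def jP (p : ℤ × ℤ) (z : ℂ) : ℂ := (p.1 : ℂ) * z + (p.2 : ℂ)

/-- `c_{γδ⁻¹} = c_γ d_δ − d_γ c_δ` in terms of the bottom rows of `γ, δ`. -/
def crossP (p q : ℤ × ℤ) : ℤ := p.1 * q.2 - p.2 * q.1

/-- `Im(γz) = Im z / |cz+d|²` in terms of the bottom row of `γ`. -/
def imP (p : ℤ × ℤ) (z : ℂ) : ℝ := z.im / Complex.normSq (jP p z)

/-- A representative Möbius action for a coset with bottom row the coprime pair `(c,d)`: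
choosing `a, b` with `ad−bc = 1`, return `(az+b)/(cz+d)`. -/
def mobiusP (p : ℤ × ℤ) (h : IsCoprime p.1 p.2) (z : ℂ) : ℂ :=
  ((h.choose_spec.choose : ℂ) * z - (h.choose : ℂ)) / jP p z

def mobiusCP (p : CP) (z : ℂ) : ℂ := mobiusP p.1 p.2 z
def mobiusCP1 (p : CP1) (z : ℂ) : ℂ := mobiusP p.1 p.2.1 z

/-- The term of the double Eisenstein series `E_{s,k-s}(z,w)`. -/
def dblEisTerm (k : ℤ) (s w : ℂ) (z : ℂ) (pq : CP × CP) : ℂ :=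
  if 0 < crossP pq.1.1 pq.2.1 then
    ((crossP pq.1.1 pq.2.1 : ℤ) : ℂ) ^ (w - 1) * (jP pq.1.1 z / jP pq.2.1 z) ^ (-s) *
      (jP pq.2.1 z) ^ (-k)
  else 0

/-- The double Eisenstein series `E_{s,k-s}(z,w)`. -/
def dblEis (k : ℤ) (s w : ℂ) (z : ℂ) : ℂ := ∑' pq : CP × CP, dblEisTerm k s w z pq

/-- The completing factor for `E*_{s,k-s}(z,w)`. -/
def eisFactor (k : ℤ) (s w : ℂ) : ℂ :=
  Complex.exp (s * Real.pi * I / 2) * Complex.Gamma s * Complex.Gamma ((k : ℂ) - s) *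
      Complex.Gamma ((k : ℂ) - w) * riemannZeta (1 - w + s) * riemannZeta (1 - w + (k : ℂ) - s) /
    ((2 : ℂ) ^ ((3 : ℂ) - w) * (Real.pi : ℂ) ^ ((k : ℂ) + 1 - w) * Complex.Gamma ((k : ℂ) - 1))

/-- The completed double Eisenstein series `E*_{s,k-s}(z,w)`. -/
def dblEisStar (k : ℤ) (s w : ℂ) (z : ℂ) : ℂ := eisFactor k s w * dblEis k s w z

/-- The weight-`k` Hecke operator `T_n`. -/
def hecke (k : ℤ) (n : ℕ) (f : ℂ → ℂ) (z : ℂ) : ℂ :=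
  (n : ℂ) ^ (k - 1) * ∑ p ∈ n.divisorsAntidiagonal,
    ((p.2 : ℕ) : ℂ) ^ (-k) * ∑ b ∈ Finset.range p.2, f (((p.1 : ℂ) * z + (b : ℂ)) / (p.2 : ℂ))

/-- The completed `L`-function `L*(f,s) = ∫_0^∞ f(iy) y^{s-1} dy`. -/
def Lstar (f : ℂ → ℂ) (s : ℂ) : ℂ := ∫ y in Set.Ioi (0 : ℝ), f ((y : ℂ) * I) * (y : ℂ) ^ (s - 1)

/-- The twisted completed `L`-function `L*(f,s;x) = ∫_0^∞ f(iy+x) y^{s-1} dy`. -/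
def LstarT (f : ℂ → ℂ) (s : ℂ) (x : ℚ) : ℂ :=
  ∫ y in Set.Ioi (0 : ℝ), f ((x : ℂ) + (y : ℂ) * I) * (y : ℂ) ^ (s - 1)

/-- The standard fundamental domain for `SL(2,ℤ)\ℍ`, as a subset of `ℝ²`. -/
def fundDom : Set (ℝ × ℝ) := {p | 0 < p.2 ∧ |p.1| ≤ 1 / 2 ∧ 1 ≤ p.1 ^ 2 + p.2 ^ 2}

/-- The Petersson inner product `⟨g,f⟩ = ∫_F g(z) conj(f(z)) y^k dx dy / y²`. -/
def petersson (k : ℤ) (g f : ℂ → ℂ) : ℂ :=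
  ∫ p in fundDom, g ((p.1 : ℂ) + (p.2 : ℂ) * I) * (starRingEnd ℂ) (f ((p.1 : ℂ) + (p.2 : ℂ) * I)) *
    ((p.2 : ℂ)) ^ (k - 2)

/-- `f` is a normalized Hecke eigenform of weight `k` for `SL(2,ℤ)`, with Fourier
coefficients `a`. -/
structure IsHeckeEigenform (k : ℤ) (f : ℂ → ℂ) (a : ℕ → ℂ) : Prop where
  holo : DifferentiableOn ℂ f {z : ℂ | 0 < z.im}
  transform : ∀ γ : SL2Z, ∀ z : ℂ, 0 < z.im → f (actZ γ z) = jZ γ z ^ k * f z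
  expansion : ∀ z : ℂ, 0 < z.im →
    HasSum (fun n : ℕ => a n * Complex.exp (2 * Real.pi * I * (n : ℂ) * z)) (f z)
  cusp : a 0 = 0
  normalized : a 1 = 1
  eigen : ∀ n : ℕ, 0 < n → ∃ lam : ℂ, ∀ z : ℂ, 0 < z.im → hecke k n f z = lam * f z

/-- The generalized Cohen kernel `C_k(z,s;x)`. -/
def cohen (k : ℤ) (s : ℂ) (x : ℚ) (z : ℂ) : ℂ :=
  (1 / 2) * ∑' γ : SL2Z, (actZ γ z + (x : ℂ)) ^ (-s) * (jZ γ z) ^ (-k)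

/-- The Poincaré series `P_k(z;m)` (over `Γ∞\Γ`). -/
def poincare (k : ℤ) (m : ℕ) (z : ℂ) : ℂ :=
  ∑' p : CP1, Complex.exp (2 * Real.pi * I * (m : ℂ) * mobiusCP1 p z) * (jP p.1 z) ^ (-k)

/-- The series `Q_k(z,l;m)`. -/
def Qser (k : ℤ) (l m : ℕ) (z : ℂ) : ℂ :=
  if l = 0 then poincare k m z
  else (1 / 2) * ∑' p : CP, Complex.exp (2 * Real.pi * I * (m : ℂ) * mobiusCP p z) *
    ((p.1.1 : ℂ)) ^ l * (jP p.1 z) ^ (-(k + (l : ℤ)))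

/-- The Rankin–Cohen bracket `[g₁,g₂]_n` of weights `k₁, k₂`. -/
def RC (k₁ k₂ n : ℕ) (g₁ g₂ : ℂ → ℂ) (z : ℂ) : ℂ :=
  ∑ r ∈ Finset.range (n + 1), (-1 : ℂ) ^ r * (Nat.choose (k₁ + n - 1) (n - r) : ℂ) *
    (Nat.choose (k₂ + n - 1) r : ℂ) * iteratedDeriv r g₁ z * iteratedDeriv (n - r) g₂ z

/-- The coefficient `A_{k₁,k₂}(l,u)_n`. -/
def Acoef (k₁ k₂ l u n : ℕ) : ℂ :=
  ((Nat.factorial (k₁ + n - 1) * Nat.factorial (k₂ + n - 1) : ℕ) : ℂ) /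
    ((Nat.factorial l * Nat.factorial u * Nat.factorial (n - l - u) *
      Nat.factorial (k₁ + l - 1) * Nat.factorial (k₂ + u - 1) : ℕ) : ℂ)

/-- The term of the double Poincaré series. -/
def dblPoinTerm (k₁ k₂ : ℤ) (w : ℂ) (m₁ m₂ : ℕ) (z : ℂ) (pq : CP × CP) : ℂ :=
  if 0 < crossP pq.1.1 pq.2.1 then
    ((crossP pq.1.1 pq.2.1 : ℤ) : ℂ) ^ (w - 1) *
      Complex.exp (2 * Real.pi * I * ((m₁ : ℂ) * mobiusCP pq.1 z + (m₂ : ℂ) * mobiusCP pq.2 z)) *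
      (jP pq.1.1 z) ^ (-k₁) * (jP pq.2.1 z) ^ (-k₂)
  else 0

/-- The double Poincaré series `P_{k₁,k₂}(z,w;m₁,m₂)`. -/
def dblPoin (k₁ k₂ : ℤ) (w : ℂ) (m₁ m₂ : ℕ) (z : ℂ) : ℂ :=
  ∑' pq : CP × CP, dblPoinTerm k₁ k₂ w m₁ m₂ z pq

/-- The double Eisenstein series `E_{k₁,k₂}(z,w)` with two integral weights. -/
def dblEis2 (k₁ k₂ : ℤ) (w : ℂ) (z : ℂ) : ℂ :=
  ∑' pq : CP × CP, if 0 < crossP pq.1.1 pq.2.1 then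
    ((crossP pq.1.1 pq.2.1 : ℤ) : ℂ) ^ (w - 1) * (jP pq.1.1 z) ^ (-k₁) * (jP pq.2.1 z) ^ (-k₂)
  else 0

/-- `f` transforms with weight `k` under `SL(2,ℤ)`. -/
def IsWeaklyModular (k : ℤ) (f : ℂ → ℂ) : Prop :=
  ∀ γ : SL2Z, ∀ z : ℂ, 0 < z.im → f (actZ γ z) = jZ γ z ^ k * f z

/-- `f` is a holomorphic modular form of weight `k` for `SL(2,ℤ)`. -/
def IsModularForm (k : ℤ) (f : ℂ → ℂ) : Prop :=
  DifferentiableOn ℂ f {z : ℂ | 0 < z.im} ∧ IsWeaklyModular k f ∧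
    ∃ C A : ℝ, ∀ z : ℂ, A ≤ z.im → ‖f z‖ ≤ C

/-- `f` is a holomorphic cusp form of weight `k` for `SL(2,ℤ)`. -/
def IsCuspForm (k : ℤ) (f : ℂ → ℂ) : Prop :=
  DifferentiableOn ℂ f {z : ℂ | 0 < z.im} ∧ IsWeaklyModular k f ∧
    Tendsto f (comap Complex.im atTop) (nhds 0)

/-- The term of the non-holomorphic kernel `K(z;s,s')`. -/
def KkerTerm (z s s' : ℂ) (γ : SL2Z) : ℂ :=
  (((actZ γ z).im : ℝ) : ℂ) ^ (s + s') / ((‖actZ γ z‖ : ℝ) : ℂ) ^ (2 * s)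

/-- The non-holomorphic kernel `K(z;s,s') = (1/2) Σ_{γ ∈ SL(2,ℤ)} Im(γz)^{s+s'}/|γz|^{2s}`. -/
def Kker (z s s' : ℂ) : ℂ := (1 / 2) * ∑' γ : SL2Z, KkerTerm z s s' γ

/-- The term of the non-holomorphic double Eisenstein series `ℰ(z,w;s,s')`. -/
def nhTerm (w s s' : ℂ) (z : ℂ) (pq : CP1 × CP1) : ℂ :=
  if crossP pq.1.1 pq.2.1 ≠ 0 then
    ((imP pq.1.1 z : ℝ) : ℂ) ^ s * ((imP pq.2.1 z : ℝ) : ℂ) ^ s' *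
      ((|crossP pq.1.1 pq.2.1| : ℤ) : ℂ) ^ (-w)
  else 0

/-- The non-holomorphic double Eisenstein series `ℰ(z,w;s,s')`. -/
def nhE (z : ℂ) (w s s' : ℂ) : ℂ := ∑' pq : CP1 × CP1, nhTerm w s s' z pq

/-- `g` is a cusp form of weight `k` with Fourier coefficients `b`. -/
structure IsCuspFormWithCoeffs (k : ℤ) (g : ℂ → ℂ) (b : ℕ → ℂ) : Prop where
  holo : DifferentiableOn ℂ g {z : ℂ | 0 < z.im}
  transform : ∀ γ : SL2Z, ∀ z : ℂ, 0 < z.im → g (actZ γ z) = jZ γ z ^ k * g z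
  expansion : ∀ z : ℂ, 0 < z.im →
    HasSum (fun n : ℕ => b n * Complex.exp (2 * Real.pi * I * (n : ℂ) * z)) (g z)
  czero : b 0 = 0

/-- The term of the quadruple-sum form of the double Eisenstein series:
`(ad−bc)^{w−1} ((az+b)/(cz+d))^{−s} (cz+d)^{−k}` for `ad−bc > 0`. -/
def quadTerm (k : ℤ) (s w : ℂ) (z : ℂ) (v : ℤ × ℤ × ℤ × ℤ) : ℂ :=
  if 0 < v.1 * v.2.2.2 - v.2.1 * v.2.2.1 then
    ((v.1 * v.2.2.2 - v.2.1 * v.2.2.1 : ℤ) : ℂ) ^ (w - 1) *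
      (((v.1 : ℂ) * z + (v.2.1 : ℂ)) / ((v.2.2.1 : ℂ) * z + (v.2.2.2 : ℂ))) ^ (-s) *
      ((v.2.2.1 : ℂ) * z + (v.2.2.2 : ℂ)) ^ (-k)
  else 0

/-- The twisted version: `(ad−bc)^{w−1} ((az+b)/(cz+d) + x)^{−s} (cz+d)^{−k}` for `ad−bc > 0`. -/
def quadTermT (k : ℤ) (s w : ℂ) (x : ℚ) (z : ℂ) (v : ℤ × ℤ × ℤ × ℤ) : ℂ :=
  if 0 < v.1 * v.2.2.2 - v.2.1 * v.2.2.1 then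
    ((v.1 * v.2.2.2 - v.2.1 * v.2.2.1 : ℤ) : ℂ) ^ (w - 1) *
      (((v.1 : ℂ) * z + (v.2.1 : ℂ)) / ((v.2.2.1 : ℂ) * z + (v.2.2.2 : ℂ)) + (x : ℂ)) ^ (-s) *
      ((v.2.2.1 : ℂ) * z + (v.2.2.2 : ℂ)) ^ (-k)
  else 0


/-!
Expand `ζ(1-w+s) = Σ_{g ≥ 1} g^{w-s-1}`. A pair of cosets `(γ, δ)` with `c = c_{γδ⁻¹} > 0`
is recorded as the bottom row `(c, d)` of `γδ⁻¹` together with `δ`; by the cocycle relation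
`j(γ,z)/j(δ,z) = c·δz + d`. As `g ≥ 1` and the coprime `(c, d)` with `c > 0` vary,
`(a, D) = (gc, gd)` runs exactly once through `ℕ₊ × ℤ`, and the summand becomes
`a^{w-s-1} (δz + D/a)^{-s} j(δ,z)^{-k}`. Writing `D = na + b` with `0 ≤ b < a`, the matrices
`T^n δ` run exactly once through `Γ`, so the sum is `a^{w-s-1} (γz + b/a)^{-s} j(γ,z)^{-k}`
summed over `a ≥ 1`, `b mod a` and `γ ∈ Γ`, that is `2 Σ_a a^{w-s-1} Σ_b C_k(z,s;b/a)`.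
All rearrangements are justified by absolute convergence, which comes from
`c_{γδ⁻¹} Im z ≤ |j(γ,z)| |j(δ,z)|` and the convergence of `Σ |cz+d|^{-r}` for `r > 2`.
-/

open Matrix ModularGroup

section BottomRow

def bottomRow (γ : SL2Z) : CP := ⟨(γ 1 0, γ 1 1), bottom_row_coprime γ⟩

def sl2zOfBottomRow (p : CP) : SL2Z :=
  ⟨!![p.2.choose_spec.choose, -p.2.choose; p.1.1, p.1.2], by
    rw [det_fin_two_of]; linear_combination p.2.choose_spec.choose_spec⟩

@[simp] lemma bottomRow_sl2zOfBottomRow (p : CP) : bottomRow (sl2zOfBottomRow p) = p := rfl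

lemma jZ_eq_jP_bottomRow (γ : SL2Z) (z : ℂ) : jZ γ z = jP (bottomRow γ).1 z := rfl

lemma SL2Z_mul_apply (A B : SL2Z) (i j : Fin 2) :
    (A * B) i j = A i 0 * B 0 j + A i 1 * B 1 j := by
  simp [Matrix.SpecialLinearGroup.coe_mul, Matrix.mul_apply, Fin.sum_univ_two]

lemma bottomRow_eq_iff {A B : SL2Z} :
    bottomRow A = bottomRow B ↔ A 1 0 = B 1 0 ∧ A 1 1 = B 1 1 :=
  Subtype.ext_iff.trans Prod.ext_iff

lemma bottomRow_mul_congr {A A' : SL2Z} (h : bottomRow A = bottomRow A') (B : SL2Z) :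
    bottomRow (A * B) = bottomRow (A' * B) := by
  obtain ⟨h0, h1⟩ := bottomRow_eq_iff.mp h
  exact bottomRow_eq_iff.mpr
    ⟨by simp [SL2Z_mul_apply, h0, h1], by simp [SL2Z_mul_apply, h0, h1]⟩

lemma crossP_bottomRow_mul (A B : SL2Z) :
    crossP (bottomRow (A * B)).1 (bottomRow B).1 = A 1 0 := by
  have hB := B.det_coe
  rw [det_fin_two] at hB
  simp only [crossP, bottomRow, SL2Z_mul_apply]
  linear_combination A 1 0 * hB

lemma eq_T_zpow_of_bottomRow_eq_one {g : SL2Z} (h : bottomRow g = bottomRow 1) :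
    g = T ^ g 0 1 := by
  obtain ⟨h0, h1⟩ := bottomRow_eq_iff.mp h
  replace h0 : g 1 0 = 0 := by simpa using h0
  replace h1 : g 1 1 = 1 := by simpa using h1
  have hg := g.det_coe
  rw [det_fin_two, h0, h1] at hg
  have h00 : g 0 0 = 1 := by linarith
  ext i j
  fin_cases i <;> fin_cases j <;>
    simp [coe_T_zpow, h00, h0, h1, show (1 : Fin (0 + 2)) = (1 : Fin 2) from rfl]

lemma T_zpow_mul_eq_of_bottomRow_eq {γ δ : SL2Z} (h : bottomRow γ = bottomRow δ) :
    T ^ ((γ * δ⁻¹) 0 1) * δ = γ := by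
  have h1 : bottomRow (γ * δ⁻¹) = bottomRow 1 := by
    rw [bottomRow_mul_congr h, mul_inv_cancel]
  rw [← eq_T_zpow_of_bottomRow_eq_one h1, inv_mul_cancel_right]

lemma bottomRow_T_zpow_mul (n : ℤ) (γ : SL2Z) : bottomRow (T ^ n * γ) = bottomRow γ := by
  simpa using bottomRow_mul_congr (A := T ^ n) (A' := 1)
    (bottomRow_eq_iff.mpr ⟨by simp [coe_T_zpow], by simp [coe_T_zpow]⟩) γ

def equivIntProdCP : SL2Z ≃ ℤ × CP where
  toFun γ := ((γ * (sl2zOfBottomRow (bottomRow γ))⁻¹) 0 1, bottomRow γ)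
  invFun nq := T ^ nq.1 * sl2zOfBottomRow nq.2
  left_inv γ := T_zpow_mul_eq_of_bottomRow_eq (by simp)
  right_inv := fun ⟨n, q⟩ => by
    simp [bottomRow_T_zpow_mul, coe_T_zpow]

end BottomRow

section Automorphy

lemma jP_ne_zero {p : ℤ × ℤ} (hp : IsCoprime p.1 p.2) {z : ℂ} (hz : 0 < z.im) :
    jP p z ≠ 0 := by
  intro h
  have hc : p.1 = 0 := by
    have h' := congrArg Complex.im h
    simp only [jP, add_im, mul_im, intCast_re, intCast_im, zero_mul, add_zero, zero_im] at h'
    exact_mod_cast (mul_eq_zero.mp h').resolve_right hz.ne'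
  have hd : p.2 = 0 := by simpa [jP, hc] using h
  rw [hc, hd] at hp
  exact not_isCoprime_zero_zero hp

lemma jZ_ne_zero (γ : SL2Z) {z : ℂ} (hz : 0 < z.im) : jZ γ z ≠ 0 :=
  jP_ne_zero (bottomRow γ).2 hz

lemma jZ_mul (A B : SL2Z) {z : ℂ} (hB : jZ B z ≠ 0) :
    jZ (A * B) z = jZ A (actZ B z) * jZ B z := by
  simp only [jZ, actZ, SL2Z_mul_apply] at hB ⊢
  rw [mul_comm] at hB
  field_simp
  push_cast
  ring

lemma actZ_T_zpow_mul (n : ℤ) (γ : SL2Z) {z : ℂ} (hγ : jZ γ z ≠ 0) :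
    actZ (T ^ n * γ) z = actZ γ z + n := by
  rw [actZ, actZ, jZ_eq_jP_bottomRow, bottomRow_T_zpow_mul, ← jZ_eq_jP_bottomRow,
    div_add' _ _ _ hγ]
  congr 1
  simp [jZ, SL2Z_mul_apply, coe_T_zpow]
  ring

lemma crossP_mul_im_le_norm_mul_norm (p q : ℤ × ℤ) (z : ℂ) :
    (crossP p q : ℝ) * z.im ≤ ‖jP p z‖ * ‖jP q z‖ := by
  have h : (crossP p q : ℝ) * z.im = (jP p z * starRingEnd ℂ (jP q z)).im := by
    simp only [jP, crossP, mul_im, conj_re, conj_im, add_re, add_im, mul_re, intCast_re,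
      intCast_im]
    push_cast
    ring
  calc (crossP p q : ℝ) * z.im ≤ ‖jP p z * starRingEnd ℂ (jP q z)‖ :=
        h ▸ (le_abs_self _).trans (abs_im_le_norm _)
    _ = ‖jP p z‖ * ‖jP q z‖ := by rw [norm_mul, norm_conj]

end Automorphy

section Reindexing

def equivFinProdSL2Z (a : ℕ+) : Fin a × SL2Z ≃ ℤ × CP :=
  ((Equiv.refl _).prodCongr equivIntProdCP).trans <|
    (Equiv.prodAssoc _ _ _).symm.trans <|
      ((Equiv.prodComm _ _).trans (Int.divModEquiv a).symm).prodCongr (Equiv.refl _)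

lemma equivFinProdSL2Z_apply (a : ℕ+) (b : Fin a) (γ : SL2Z) :
    equivFinProdSL2Z a (b, γ) = ((equivIntProdCP γ).1 * a + b, bottomRow γ) := rfl

def CPPos : Type := {p : CP // 0 < p.1.1}

def scaleEquiv : ℕ+ × CPPos ≃ ℕ+ × ℤ where
  toFun gm := (gm.1 * gm.2.1.1.1.toNat.toPNat (by have := gm.2.2; omega), gm.1 * gm.2.1.1.2)
  invFun aD :=
    have hg : 0 < Int.gcd aD.1 aD.2 := Int.gcd_pos_of_ne_zero_left _ (by positivity)
    (⟨_, hg⟩, ⟨⟨((aD.1 : ℤ) / Int.gcd aD.1 aD.2, aD.2 / Int.gcd aD.1 aD.2),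
      Int.isCoprime_iff_gcd_eq_one.mpr (Int.gcd_div_gcd_div_gcd hg)⟩,
      Int.ediv_pos_of_pos_of_dvd (by positivity) (by positivity) (Int.gcd_dvd_left _ _)⟩)
  left_inv := fun ⟨g, ⟨⟨(c, d), hcd⟩, hc⟩⟩ => by
    have hc' (h) : (((c.toNat.toPNat h : ℕ+) : ℕ) : ℤ) = c := Int.toNat_of_nonneg hc.le
    have hgcd : Int.gcd (g * c) (g * d) = g := by
      rw [Int.gcd_mul_left, Int.isCoprime_iff_gcd_eq_one.mp hcd]; simp
    refine Prod.ext (PNat.eq ?_) (Subtype.ext (Subtype.ext (Prod.ext ?_ ?_))) <;>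
      simp [hc', hgcd]
  right_inv := fun ⟨a, D⟩ => by
    have hga : (Int.gcd a D : ℤ) ∣ a := Int.gcd_dvd_left _ _
    have hc : 0 ≤ (a : ℤ) / Int.gcd a D := Int.ediv_nonneg (by positivity) (by positivity)
    refine Prod.ext (PNat.eq (Nat.cast_injective (R := ℤ) ?_))
      (Int.mul_ediv_cancel' (Int.gcd_dvd_right _ _))
    rw [PNat.mul_coe, Nat.cast_mul]
    exact (congrArg _ (Int.toNat_of_nonneg hc)).trans (Int.mul_ediv_cancel' hga)

def CrossPosPairs : Type := {pq : CP × CP // 0 < crossP pq.1.1 pq.2.1}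

lemma bottomRow_mul_inv_sl2zOfBottomRow_fst (p q : CP) :
    (bottomRow (sl2zOfBottomRow p * (sl2zOfBottomRow q)⁻¹)).1.1 = crossP p.1 q.1 := by
  have h := crossP_bottomRow_mul (sl2zOfBottomRow p * (sl2zOfBottomRow q)⁻¹) (sl2zOfBottomRow q)
  rw [inv_mul_cancel_right, bottomRow_sl2zOfBottomRow, bottomRow_sl2zOfBottomRow] at h
  exact h.symm

def crossPosPairsEquiv : CrossPosPairs ≃ CPPos × CP where
  toFun pq := (⟨bottomRow (sl2zOfBottomRow pq.1.1 * (sl2zOfBottomRow pq.1.2)⁻¹),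
    lt_of_lt_of_eq pq.2 (bottomRow_mul_inv_sl2zOfBottomRow_fst _ _).symm⟩, pq.1.2)
  invFun mq := ⟨(bottomRow (sl2zOfBottomRow mq.1.1 * sl2zOfBottomRow mq.2), mq.2),
    lt_of_lt_of_eq mq.1.2
      (crossP_bottomRow_mul (sl2zOfBottomRow mq.1.1) (sl2zOfBottomRow mq.2)).symm⟩
  left_inv := fun ⟨(p, q), _⟩ => by
    apply Subtype.ext
    simp [bottomRow_mul_congr (bottomRow_sl2zOfBottomRow _)]
  right_inv := fun ⟨m, q⟩ => by
    refine Prod.ext (Subtype.ext ?_) rfl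
    simp [bottomRow_mul_congr (bottomRow_sl2zOfBottomRow _)]

def scaledPairsEquiv : ℕ+ × CrossPosPairs ≃ ℕ+ × ℤ × CP :=
  ((Equiv.refl ℕ+).prodCongr crossPosPairsEquiv).trans <|
    (Equiv.prodAssoc _ _ _).symm.trans <|
      (scaleEquiv.prodCongr (Equiv.refl CP)).trans (Equiv.prodAssoc _ _ _)

def cohenIndexEquiv : (Σ a : ℕ+, Fin a × SL2Z) ≃ ℕ+ × ℤ × CP :=
  (Equiv.sigmaCongrRight equivFinProdSL2Z).trans (Equiv.sigmaEquivProd _ _)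

end Reindexing

lemma Complex.ofReal_mul_cpow {r : ℝ} (hr : 0 ≤ r) (u t : ℂ) :
    ((r : ℂ) * u) ^ t = (r : ℂ) ^ t * u ^ t := by
  rcases hr.eq_or_lt with rfl | hr
  · rcases eq_or_ne t 0 with rfl | ht <;> simp [*]
  rcases eq_or_ne u 0 with rfl | hu
  · rcases eq_or_ne t 0 with rfl | ht <;> simp [*]
  have hr' : (r : ℂ) ≠ 0 := by exact_mod_cast hr.ne'
  rw [cpow_def_of_ne_zero (mul_ne_zero hr' hu), cpow_def_of_ne_zero hr', cpow_def_of_ne_zero hu,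
    log_ofReal_mul hr hu, ← exp_add, add_mul, ofReal_log hr.le]

section Summands

variable (k : ℤ) (s w z : ℂ)

def latticeSummand (x : ℕ+ × ℤ × CP) : ℂ :=
  ((x.1 : ℕ) : ℂ) ^ (w - s - 1) *
    (actZ (sl2zOfBottomRow x.2.2) z + (x.2.1 : ℂ) / ((x.1 : ℕ) : ℂ)) ^ (-s) *
      jP x.2.2.1 z ^ (-k)

def cohenSummand (x : Σ a : ℕ+, Fin a × SL2Z) : ℂ :=
  ((x.1 : ℕ) : ℂ) ^ (w - s - 1) *
    ((actZ x.2.2 z + ((x.2.1 : ℕ) : ℂ) / ((x.1 : ℕ) : ℂ)) ^ (-s) * jZ x.2.2 z ^ (-k))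

variable {z}

lemma latticeSummand_cohenIndexEquiv (hz : 0 < z.im) (x : Σ a : ℕ+, Fin a × SL2Z) :
    latticeSummand k s w z (cohenIndexEquiv x) = cohenSummand k s w z x := by
  obtain ⟨a, b, γ⟩ := x
  rcases hnq : equivIntProdCP γ with ⟨n, q⟩
  have hγ : γ = T ^ n * sl2zOfBottomRow q := by
    rw [← equivIntProdCP.symm_apply_apply γ, hnq]; rfl
  have hq : bottomRow γ = q := congrArg Prod.snd hnq
  have ha : ((a : ℕ) : ℂ) ≠ 0 := Nat.cast_ne_zero.mpr a.ne_zero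
  simp only [latticeSummand, cohenSummand, cohenIndexEquiv, Equiv.trans_apply,
    Equiv.sigmaCongrRight_apply, equivFinProdSL2Z_apply, hnq, hq, Equiv.sigmaEquivProd_apply]
  rw [jZ_eq_jP_bottomRow, hq, hγ, actZ_T_zpow_mul _ _ (jZ_ne_zero _ hz)]
  push_cast
  rw [add_div, mul_div_cancel_right₀ _ ha]
  ring_nf

lemma latticeSummand_scaledPairsEquiv (hz : 0 < z.im) (g : ℕ+) (pq : CrossPosPairs) :
    latticeSummand k s w z (scaledPairsEquiv (g, pq)) =
      ((g : ℕ) : ℂ) ^ (w - s - 1) * dblEisTerm k s w z pq.1 := by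
  obtain ⟨⟨p, q⟩, hpq⟩ := pq
  set M := sl2zOfBottomRow p * (sl2zOfBottomRow q)⁻¹
  set τ := actZ (sl2zOfBottomRow q) z
  have hc : M 1 0 = crossP p.1 q.1 := bottomRow_mul_inv_sl2zOfBottomRow_fst p q
  have hcpos : 0 < M 1 0 := hc ▸ hpq
  have hjq : jP q.1 z ≠ 0 := jP_ne_zero q.2 hz
  have hratio : jP p.1 z / jP q.1 z = (M 1 0 : ℂ) * τ + (M 1 1 : ℂ) := by
    have h := jZ_mul M (sl2zOfBottomRow q) (jZ_ne_zero _ hz)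
    rw [inv_mul_cancel_right, jZ_eq_jP_bottomRow, jZ_eq_jP_bottomRow (sl2zOfBottomRow q),
      bottomRow_sl2zOfBottomRow, bottomRow_sl2zOfBottomRow] at h
    rw [h, mul_div_cancel_right₀ _ hjq]
    simp [jZ, τ]
  set c : ℕ := (M 1 0).toNat
  have hcM : (c : ℤ) = M 1 0 := Int.toNat_of_nonneg hcpos.le
  have hc0 : (c : ℂ) ≠ 0 := by
    have : (c : ℤ) ≠ 0 := hcM ▸ hcpos.ne'
    exact_mod_cast this
  have hg0 : ((g : ℕ) : ℂ) ≠ 0 := Nat.cast_ne_zero.mpr g.ne_zero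
  have happ : scaledPairsEquiv (g, ⟨(p, q), hpq⟩) =
      (g * c.toPNat (by omega), g * M 1 1, q) := rfl
  have hsplit : (c : ℂ) * τ + (M 1 1 : ℂ) = ((c : ℝ) : ℂ) * (τ + (M 1 1 : ℂ) / c) := by
    push_cast
    field_simp
  rw [happ, latticeSummand, dblEisTerm, if_pos hpq, ← hc, hratio, ← hcM]
  simp only [Int.cast_natCast]
  rw [hsplit, Complex.ofReal_mul_cpow (Nat.cast_nonneg c), PNat.mul_coe, Nat.toPNat,
    PNat.mk_coe, Nat.cast_mul, natCast_mul_natCast_cpow]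
  push_cast
  rw [mul_div_mul_left _ _ hg0, show w - s - 1 = (w - 1) + -s by ring, cpow_add _ _ hc0]
  ring

end Summands

section Convergence

lemma summable_norm_jP_rpow_neg {r : ℝ} (hr : 2 < r) {z : ℂ} (hz : 0 < z.im) :
    Summable fun p : CP => ‖jP p.1 z‖ ^ (-r) := by
  have hvec : Summable fun x : Fin 2 → ℤ => ‖(x 0 : ℂ) * z + x 1‖ ^ (-r) :=
    ((EisensteinSeries.summable_one_div_norm_rpow hr).mul_left
        (EisensteinSeries.r ⟨z, hz⟩ ^ (-r))).of_nonneg_of_le (fun _ => by positivity)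
      (EisensteinSeries.summand_bound ⟨z, hz⟩ (by linarith))
  have hinj : Function.Injective fun p : CP => ![p.1.1, p.1.2] := fun p q h =>
    Subtype.ext (Prod.ext (congrFun h 0) (congrFun h 1))
  simpa [jP, Function.comp_def] using hvec.comp_injective hinj

lemma norm_cpow_le_mul_exp (x y : ℂ) :
    ‖x ^ y‖ ≤ ‖x‖ ^ y.re * Real.exp (Real.pi * |y.im|) := by
  refine (norm_cpow_le x y).trans ?_
  rw [div_eq_mul_inv, ← Real.exp_neg]
  gcongr
  calc -(x.arg * y.im) ≤ |x.arg| * |y.im| := by rw [← abs_mul]; exact neg_le_abs _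
    _ ≤ Real.pi * |y.im| := by gcongr; exact abs_arg_le_pi x

lemma norm_dblEisTerm_le (k : ℤ) (s w : ℂ) {z : ℂ} (hz : 0 < z.im) {t : ℝ} (ht0 : 0 ≤ t)
    (htw : w.re - 1 ≤ t) (pq : CP × CP) :
    ‖dblEisTerm k s w z pq‖ ≤ Real.exp (Real.pi * |s.im|) * z.im ^ (-t) *
      (‖jP pq.1.1 z‖ ^ (t - s.re) * ‖jP pq.2.1 z‖ ^ (t + s.re - k)) := by
  obtain ⟨p, q⟩ := pq
  set P := ‖jP p.1 z‖
  set Q := ‖jP q.1 z‖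
  have hP : 0 < P := norm_pos_iff.mpr (jP_ne_zero p.2 hz)
  have hQ : 0 < Q := norm_pos_iff.mpr (jP_ne_zero q.2 hz)
  rw [dblEisTerm]
  split_ifs with hc
  swap
  · rw [norm_zero]; positivity
  set n := crossP p.1 q.1
  have hn : (1 : ℝ) ≤ n := by exact_mod_cast hc
  have hcross : (n : ℝ) ^ (w.re - 1) ≤ (P * Q / z.im) ^ t :=
    calc (n : ℝ) ^ (w.re - 1) ≤ (n : ℝ) ^ t := Real.rpow_le_rpow_of_exponent_le hn htw
      _ ≤ (P * Q / z.im) ^ t := by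
        gcongr
        rw [le_div_iff₀ hz]
        exact crossP_mul_im_le_norm_mul_norm p.1 q.1 z
  have hratio :
      ‖(jP p.1 z / jP q.1 z) ^ (-s)‖ ≤ (P / Q) ^ (-s.re) * Real.exp (Real.pi * |s.im|) := by
    simpa [P, Q] using norm_cpow_le_mul_exp (jP p.1 z / jP q.1 z) (-s)
  have hn' : ‖((n : ℤ) : ℂ) ^ (w - 1)‖ = (n : ℝ) ^ (w.re - 1) := by
    rw [← ofReal_intCast, norm_cpow_eq_rpow_re_of_pos (by linarith)]
    simp
  have hq' : ‖jP q.1 z ^ (-k)‖ = Q ^ (-(k : ℝ)) := by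
    rw [norm_zpow, ← Real.rpow_intCast]
    push_cast
    rfl
  rw [norm_mul, norm_mul, hn', hq']
  calc (n : ℝ) ^ (w.re - 1) * ‖(jP p.1 z / jP q.1 z) ^ (-s)‖ * Q ^ (-(k : ℝ))
      ≤ (P * Q / z.im) ^ t * ((P / Q) ^ (-s.re) * Real.exp (Real.pi * |s.im|)) *
          Q ^ (-(k : ℝ)) := by gcongr
    _ = _ := by
        rw [Real.div_rpow (by positivity) hz.le, Real.mul_rpow hP.le hQ.le,
          Real.div_rpow hP.le hQ.le, Real.rpow_sub hP, Real.rpow_sub hQ, Real.rpow_add hQ,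
          Real.rpow_neg hz.le, Real.rpow_neg hP.le, Real.rpow_neg hQ.le, Real.rpow_neg hQ.le]
        field_simp

lemma summable_norm_dblEisTerm (k : ℤ) {s w : ℂ} (hs1 : 2 < s.re) (hs2 : s.re < k - 2)
    (hw1 : w.re < s.re - 1) (hw2 : w.re < k - 1 - s.re) {z : ℂ} (hz : 0 < z.im) :
    Summable fun pq : CP × CP => ‖dblEisTerm k s w z pq‖ := by
  set t := max (w.re - 1) 0
  have hp : 2 < s.re - t := by
    have : t < s.re - 2 := max_lt (by linarith) (by linarith)
    linarith
  have hq : 2 < k - s.re - t := by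
    have : t < k - s.re - 2 := max_lt (by linarith) (by linarith)
    linarith
  have hprod := ((summable_norm_jP_rpow_neg hp hz).mul_of_nonneg
    (summable_norm_jP_rpow_neg hq hz) (fun _ => by positivity) (fun _ => by positivity)).mul_left
    (Real.exp (Real.pi * |s.im|) * z.im ^ (-t))
  refine hprod.of_nonneg_of_le (fun _ => norm_nonneg _) fun pq => ?_
  convert norm_dblEisTerm_le k s w hz (le_max_right _ _) (le_max_left _ _) pq using 4 <;> ring

lemma riemannZeta_eq_tsum_pnat_cpow {u : ℂ} (hu : 1 < u.re) :
    riemannZeta u = ∑' n : ℕ+, ((n : ℕ) : ℂ) ^ (-u) := by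
  rw [zeta_eq_tsum_one_div_nat_add_one_cpow hu,
    tsum_pnat_eq_tsum_succ (f := fun n => (n : ℂ) ^ (-u))]
  simp [cpow_neg]

lemma summable_norm_pnat_cpow {u : ℂ} (hu : u.re < -1) :
    Summable fun n : ℕ+ => ‖((n : ℕ) : ℂ) ^ u‖ := by
  simp_rw [norm_natCast_cpow_of_pos (PNat.pos _)]
  exact (Real.summable_nat_rpow.mpr hu).comp_injective PNat.coe_injective

lemma hasSum_riemannZeta_mul_dblEis (k : ℤ) {s w : ℂ} (hs1 : 2 < s.re) (hs2 : s.re < k - 2)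
    (hw1 : w.re < s.re - 1) (hw2 : w.re < k - 1 - s.re) {z : ℂ} (hz : 0 < z.im) :
    HasSum (fun x : ℕ+ × CrossPosPairs =>
        ((x.1 : ℕ) : ℂ) ^ (w - s - 1) * dblEisTerm k s w z x.2.1)
      (riemannZeta (1 - w + s) * dblEis k s w z) := by
  have hζ : Summable fun n : ℕ+ => ‖((n : ℕ) : ℂ) ^ (w - s - 1)‖ :=
    summable_norm_pnat_cpow (by simp; linarith)
  have hE : Summable fun pq : CrossPosPairs => ‖dblEisTerm k s w z pq.1‖ :=
    (summable_norm_dblEisTerm k hs1 hs2 hw1 hw2 hz).comp_injective Subtype.val_injective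
  have hsupp : Function.support (dblEisTerm k s w z) ⊆ {pq | 0 < crossP pq.1.1 pq.2.1} :=
    fun pq hpq => by_contra fun hc => hpq (if_neg hc)
  rw [riemannZeta_eq_tsum_pnat_cpow (by simp; linarith), dblEis,
    ← tsum_subtype_eq_of_support_subset hsupp]
  change HasSum _ ((∑' n : ℕ+, ((n : ℕ) : ℂ) ^ (-(1 - w + s))) *
    ∑' pq : CrossPosPairs, dblEisTerm k s w z pq.1)
  rw [show -(1 - w + s) = w - s - 1 by ring, tsum_mul_tsum_of_summable_norm hζ hE]
  exact (summable_mul_of_summable_norm hζ hE).hasSum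

end Convergence

lemma hasSum_cohenSummand_fiber (k : ℤ) (s w z : ℂ) {a : ℕ+}
    (h : Summable fun bγ : Fin a × SL2Z => cohenSummand k s w z ⟨a, bγ⟩) :
    HasSum (fun bγ : Fin a × SL2Z => cohenSummand k s w z ⟨a, bγ⟩)
      (2 * (((a : ℕ) : ℂ) ^ (w - s - 1) *
        ∑ b ∈ Finset.range a, cohen k s ((b : ℚ) / ((a : ℕ) : ℚ)) z)) := by
  convert h.hasSum using 1
  rw [h.tsum_prod, tsum_fintype, ← Fin.sum_univ_eq_sum_range, Finset.mul_sum, Finset.mul_sum]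
  refine Finset.sum_congr rfl fun b _ => ?_
  simp only [cohenSummand, cohen, tsum_mul_left]
  push_cast
  ring

theorem statement7_general (k : ℤ) (s w : ℂ)
    (hs1 : 2 < s.re) (hs2 : s.re < (k : ℝ) - 2)
    (hw1 : w.re < s.re - 1) (hw2 : w.re < (k : ℝ) - 1 - s.re) (z : ℂ) (hz : 0 < z.im) :
    (Summable fun a : ℕ+ => ((a : ℕ) : ℂ) ^ (w - s - 1) *
      ∑ b ∈ Finset.range (a : ℕ), cohen k s ((b : ℚ) / ((a : ℕ) : ℚ)) z) ∧
    riemannZeta (1 - w + s) * dblEis k s w z =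
      2 * ∑' a : ℕ+, ((a : ℕ) : ℂ) ^ (w - s - 1) *
        ∑ b ∈ Finset.range (a : ℕ), cohen k s ((b : ℚ) / ((a : ℕ) : ℚ)) z := by
  have hpairs := hasSum_riemannZeta_mul_dblEis k hs1 hs2 hw1 hw2 hz
  have hlattice : HasSum (latticeSummand k s w z) (riemannZeta (1 - w + s) * dblEis k s w z) := by
    rw [← scaledPairsEquiv.hasSum_iff]
    simpa [Function.comp_def, latticeSummand_scaledPairsEquiv k s w hz] using hpairs
  have hcohen : HasSum (cohenSummand k s w z) (riemannZeta (1 - w + s) * dblEis k s w z) := by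
    rw [← cohenIndexEquiv.hasSum_iff] at hlattice
    simpa [Function.comp_def, latticeSummand_cohenIndexEquiv k s w hz] using hlattice
  have hfibers := hcohen.sigma fun a =>
    hasSum_cohenSummand_fiber k s w z (hcohen.summable.sigma_factor a)
  have hsum := hfibers.div_const 2
  simp only [mul_div_cancel_left₀ _ (two_ne_zero' ℂ)] at hsum
  exact ⟨hsum.summable, by rw [hsum.tsum_eq]; ring⟩

/-- `ζ(1-w+s) E_{s,k-s}(z,w) = 2 Σ_{a≥1} a^{w-s-1} Σ_{0≤b<a} C_k(z,s;b/a)`. -/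
theorem statement7 (k : ℤ) (hke : Even k) (s w : ℂ)
    (hs1 : 2 < s.re) (hs2 : s.re < (k : ℝ) - 2)
    (hw1 : w.re < s.re - 1) (hw2 : w.re < (k : ℝ) - 1 - s.re) (z : ℂ) (hz : 0 < z.im) :
    (Summable fun a : ℕ+ => ((a : ℕ) : ℂ) ^ (w - s - 1) *
      ∑ b ∈ Finset.range (a : ℕ), cohen k s ((b : ℚ) / ((a : ℕ) : ℚ)) z) ∧
    riemannZeta (1 - w + s) * dblEis k s w z =
      2 * ∑' a : ℕ+, ((a : ℕ) : ℂ) ^ (w - s - 1) *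
        ∑ b ∈ Finset.range (a : ℕ), cohen k s ((b : ℚ) / ((a : ℕ) : ℚ)) z :=
  statement7_general k s w hs1 hs2 hw1 hw2 z hz
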